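/- Let (A, m) be a local ring, (f₁, …, fₙ) polynomials in A[X₁,…,Xₙ], a ∈ Aⁿ with all fⱼ(a) ∈ m, and U ∈ Mₙ(A) with U·J(a) ≡ Iₙ (mod m), where J is the Jacobian matrix. Define a⁽⁰⁾ = a, U⁽⁰⁾ = U, a⁽ᵐ⁺¹⁾ = a⁽ᵐ⁾ - U⁽ᵐ⁾·f(a⁽ᵐ⁾), U⁽ᵐ⁺¹⁾ = U⁽ᵐ⁾(2Iₙ - J(a⁽ᵐ⁺¹⁾)U⁽ᵐ⁾). Then for all m: f(a⁽ᵐ⁾) ≡ 0 (mod m^{2^m}) and U⁽ᵐ⁾J(a⁽ᵐ⁾) ≡ Iₙ (mod m^{2^m}). -/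
import Mathlib


open MvPolynomial IsLocalRing

lemma taylor_aux {A : Type*} [CommRing A] {n : ℕ} (I : Ideal A)
    (a b : Fin n → A) (h : ∀ i, b i - a i ∈ I) (p : MvPolynomial (Fin n) A) :
    eval b p - eval a p - ∑ j, eval a (pderiv j p) * (b j - a j) ∈ I ^ 2 := by
  induction p using MvPolynomial.induction_on with
  | C c => simp
  | add p q hp hq =>
      have := Ideal.add_mem _ hp hq
      convert this using 1
      simp only [map_add, eval_add, add_mul, Finset.sum_add_distrib]
      ring
  | mul_X p i hp =>
      have hS : (∑ j, eval a (pderiv j p) * (b j - a j)) ∈ I :=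
        Ideal.sum_mem _ fun j _ => Ideal.mul_mem_left _ _ (h j)
      have key : eval b (p * X i) - eval a (p * X i)
          - ∑ j, eval a (pderiv j (p * X i)) * (b j - a j)
          = (∑ j, eval a (pderiv j p) * (b j - a j)) * (b i - a i)
            + (eval b p - eval a p - ∑ j, eval a (pderiv j p) * (b j - a j)) * b i := by
        simp only [pderiv_mul, pderiv_X, Pi.single_apply, map_add, eval_add, eval_mul, eval_X,
          apply_ite (eval a), map_one, map_zero, mul_ite, ite_mul, mul_one, mul_zero, zero_mul,
          add_mul, Finset.sum_add_distrib, Finset.sum_ite_eq, Finset.mem_univ, if_true]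
        have e1 : ∑ x : Fin n, (eval a) ((pderiv x) p) * a i * (b x - a x) =
            (∑ j : Fin n, (eval a) ((pderiv j) p) * (b j - a j)) * a i := by
          rw [Finset.sum_mul]; exact Finset.sum_congr rfl fun j _ => by ring
        rw [e1]; ring
      rw [key, pow_two]
      exact add_mem (Ideal.mul_mem_mul hS (h i))
        (Ideal.mul_mem_right _ _ (by rwa [pow_two] at hp))

lemma eval_diff_mem {A : Type*} [CommRing A] {n : ℕ} (I : Ideal A)
    (a b : Fin n → A) (h : ∀ i, b i - a i ∈ I) (p : MvPolynomial (Fin n) A) :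
    eval b p - eval a p ∈ I := by
  have := taylor_aux I a b h p
  have h2 := Ideal.pow_le_self (n := 2) two_ne_zero this
  have hS : (∑ j, eval a (pderiv j p) * (b j - a j)) ∈ I :=
    Ideal.sum_mem _ fun j _ => Ideal.mul_mem_left _ _ (h j)
  have := add_mem h2 hS
  simpa using this

lemma left_inv_comm_mod {A : Type*} [CommRing A] {n : ℕ} (I : Ideal A)
    (U V : Matrix (Fin n) (Fin n) A)
    (h : ∀ i j, (U * V) i j - (1 : Matrix (Fin n) (Fin n) A) i j ∈ I) :
    ∀ i j, (V * U) i j - (1 : Matrix (Fin n) (Fin n) A) i j ∈ I := by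
  have key : ∀ M N : Matrix (Fin n) (Fin n) A,
      (Ideal.Quotient.mk I).mapMatrix M = (Ideal.Quotient.mk I).mapMatrix N ↔
      ∀ i j, M i j - N i j ∈ I := by
    intro M N
    constructor
    · intro hMN i j
      have := congrFun (congrFun (congrArg (fun X => (X : Matrix _ _ _)) hMN) i) j
      simpa [RingHom.mapMatrix_apply, Matrix.map_apply, Ideal.Quotient.mk_eq_mk_iff_sub_mem]
        using this
    · intro hMN
      ext i j
      simpa [RingHom.mapMatrix_apply, Matrix.map_apply, Ideal.Quotient.mk_eq_mk_iff_sub_mem]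
        using hMN i j
  have h1 : (Ideal.Quotient.mk I).mapMatrix U * (Ideal.Quotient.mk I).mapMatrix V = 1 := by
    rw [← map_mul, ← map_one ((Ideal.Quotient.mk I).mapMatrix)]
    exact (key _ _).mpr h
  have h2 := mul_eq_one_comm.mp h1
  rw [← map_mul, ← map_one ((Ideal.Quotient.mk I).mapMatrix)] at h2
  exact (key _ _).mp h2

/-- The quadratic Newton method over a local ring: given a Newton polynomial system at `a`
and an approximate inverse `U` of the Jacobian matrix `J(a)` modulo `m`, the Newton iteration
`a⁽ᵐ⁺¹⁾ = a⁽ᵐ⁾ - U⁽ᵐ⁾·f(a⁽ᵐ⁾)`, `U⁽ᵐ⁺¹⁾ = U⁽ᵐ⁾(2·Iₙ - J(a⁽ᵐ⁺¹⁾)·U⁽ᵐ⁾)` satisfies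
`f(a⁽ᵐ⁾) ≡ 0` and `U⁽ᵐ⁾·J(a⁽ᵐ⁾) ≡ Iₙ (mod m^{2^m})`. -/
theorem quadratic_newton_method {A : Type*} [CommRing A] [IsLocalRing A]
    {n : ℕ} (f : Fin n → MvPolynomial (Fin n) A)
    (J : (Fin n → A) → Matrix (Fin n) (Fin n) A)
    (hJ : ∀ x, J x = Matrix.of fun i j => MvPolynomial.eval x (MvPolynomial.pderiv j (f i)))
    (a : Fin n → A) (U : Matrix (Fin n) (Fin n) A)
    (hfa : ∀ j, MvPolynomial.eval a (f j) ∈ maximalIdeal A)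
    (hUJ : ∀ i j, (U * J a) i j - (1 : Matrix (Fin n) (Fin n) A) i j ∈ maximalIdeal A)
    (aSeq : ℕ → Fin n → A) (USeq : ℕ → Matrix (Fin n) (Fin n) A)
    (ha0 : aSeq 0 = a) (hU0 : USeq 0 = U)
    (haS : ∀ m, aSeq (m + 1) =
      fun i => aSeq m i - ∑ j, USeq m i j * MvPolynomial.eval (aSeq m) (f j))
    (hUS : ∀ m, USeq (m + 1) =
      USeq m * (2 • (1 : Matrix (Fin n) (Fin n) A) - J (aSeq (m + 1)) * USeq m)) :
    ∀ m : ℕ,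
      (∀ j, MvPolynomial.eval (aSeq m) (f j) ∈ (maximalIdeal A) ^ (2 ^ m)) ∧
      (∀ i j, (USeq m * J (aSeq m)) i j - (1 : Matrix (Fin n) (Fin n) A) i j ∈
        (maximalIdeal A) ^ (2 ^ m)) := by
  intro m
  induction m with
  | zero => simpa [ha0, hU0] using ⟨hfa, hUJ⟩
  | succ m ih =>
    obtain ⟨ih1, ih2⟩ := ih
    set I : Ideal A := (maximalIdeal A) ^ (2 ^ m) with hI
    have hIpow : (maximalIdeal A) ^ (2 ^ (m + 1)) = I ^ 2 := by
      rw [hI, ← pow_mul, pow_succ]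
    rw [hIpow]
    set am : Fin n → A := aSeq m with ham
    set b : Fin n → A := aSeq (m + 1) with hb
    set Um : Matrix (Fin n) (Fin n) A := USeq m with hUm
    have hstep : ∀ i, b i = am i - ∑ j, Um i j * eval am (f j) := by
      intro i; rw [hb, haS m]
    have hdiff : ∀ i, b i - am i ∈ I := by
      intro i
      rw [hstep i]
      have : am i - ∑ j, Um i j * eval am (f j) - am i = -∑ j, Um i j * eval am (f j) := by ring
      rw [this]
      exact neg_mem (Ideal.sum_mem _ fun j _ => Ideal.mul_mem_left _ _ (ih1 j))
    have hJU : ∀ i j, (J am * Um) i j - (1 : Matrix (Fin n) (Fin n) A) i j ∈ I :=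
      left_inv_comm_mod I Um (J am) ih2
    constructor
    · -- f(a^{m+1}) ∈ I^2
      intro k
      have htay := taylor_aux I am b hdiff (f k)
      have h2 : (∑ j, eval am (pderiv j (f k)) * (b j - am j)) + eval am (f k) ∈ I ^ 2 := by
        have heq : (∑ j, eval am (pderiv j (f k)) * (b j - am j)) + eval am (f k)
            = ∑ l, ((1 : Matrix (Fin n) (Fin n) A) k l - (J am * Um) k l) * eval am (f l) := by
          have e1 : ∀ j, eval am (pderiv j (f k)) * (b j - am j)
              = -(J am k j * ∑ l, Um j l * eval am (f l)) := by
            intro j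
            rw [hJ am, hstep j]
            simp only [Matrix.of_apply]
            ring
          have e2 : ∀ j, J am k j * ∑ l, Um j l * eval am (f l)
              = ∑ l, J am k j * Um j l * eval am (f l) := by
            intro j; rw [Finset.mul_sum]; exact Finset.sum_congr rfl fun l _ => by ring
          have lhs : (∑ j, eval am (pderiv j (f k)) * (b j - am j))
              = -∑ l, (J am * Um) k l * eval am (f l) := by
            simp only [e1, e2]
            rw [Finset.sum_neg_distrib, Finset.sum_comm]
            congr 1
            refine Finset.sum_congr rfl fun l _ => ?_
            rw [Matrix.mul_apply, Finset.sum_mul]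
          rw [lhs]
          simp only [sub_mul, Finset.sum_sub_distrib, Matrix.one_apply, ite_mul, one_mul,
            zero_mul, Finset.sum_ite_eq, Finset.sum_ite_eq', Finset.mem_univ, if_true]
          ring
        rw [heq, pow_two]
        refine Ideal.sum_mem _ fun l _ => Ideal.mul_mem_mul ?_ (ih1 l)
        have := hJU k l
        simpa using neg_mem this
      have : eval b (f k) = (eval b (f k) - eval am (f k)
          - ∑ j, eval am (pderiv j (f k)) * (b j - am j))
          + ((∑ j, eval am (pderiv j (f k)) * (b j - am j)) + eval am (f k)) := by ring
      rw [this]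
      exact add_mem htay h2
    · -- U^{m+1} J(a^{m+1}) ≡ 1 mod I^2
      intro i j
      have hJb : ∀ i j, J b i j - J am i j ∈ I := by
        intro i j
        rw [hJ b, hJ am]
        exact eval_diff_mem I am b hdiff _
      have hE : ∀ i j, (Um * J b - 1) i j ∈ I := by
        intro i j
        have : (Um * J b - 1) i j = ((Um * J am) i j - (1 : Matrix (Fin n) (Fin n) A) i j)
            + ∑ k, Um i k * (J b k j - J am k j) := by
          simp only [Matrix.sub_apply, Matrix.mul_apply, mul_sub, Finset.sum_sub_distrib]
          ring
        rw [this]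
        exact add_mem (ih2 i j) (Ideal.sum_mem _ fun k _ => Ideal.mul_mem_left _ _ (hJb k j))
      have hfinal : USeq (m + 1) * J b - 1 = -((Um * J b - 1) * (Um * J b - 1)) := by
        rw [hUS m, ← hb, ← hUm, two_smul]
        noncomm_ring
      have : (USeq (m + 1) * J b) i j - (1 : Matrix (Fin n) (Fin n) A) i j
          = (-((Um * J b - 1) * (Um * J b - 1))) i j := by
        rw [← hfinal]; simp [Matrix.sub_apply]
      rw [this]
      simp only [Matrix.neg_apply, Matrix.mul_apply]
      refine neg_mem (Ideal.sum_mem _ fun k _ => ?_)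
      rw [pow_two]
      exact Ideal.mul_mem_mul (hE i k) (hE k j)
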